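/- The minimum Hamming distance of C^{⊗[r,m]} equals d^r · n^{m-r}, where d is the minimum distance of C. -/

import Mathlib

def allOnes (n : ℕ) : Fin n → ZMod 2 := fun _ => 1

def bvec {n k : ℕ} {ι : Type} [Fintype ι] (g : Fin k → Fin n → ZMod 2)
    (j : ι → Fin k) : (ι → Fin n) → ZMod 2 :=
  fun i => ∏ ℓ, g (j ℓ) (i ℓ)

def subprod (n k : ℕ) [NeZero k] (r : ℕ) (ι : Type) [Fintype ι] [DecidableEq ι]
    (g : Fin k → Fin n → ZMod 2) : Submodule (ZMod 2) ((ι → Fin n) → ZMod 2) :=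
  Submodule.span (ZMod 2)
    {c | ∃ j : ι → Fin k, (Finset.univ.filter fun ℓ => j ℓ ≠ 0).card ≤ r ∧ c = bvec g j}

def tens2 {n m : ℕ} (d : (Fin m → Fin n) → ZMod 2) (a : Fin n → ZMod 2) :
    (Fin (m + 1) → Fin n) → ZMod 2 :=
  fun i => d (Fin.init i) * a (i (Fin.last m))

-- basic tens2 lemmas
lemma tens2_zero {n m : ℕ} (a : Fin n → ZMod 2) : tens2 (0 : (Fin m → Fin n) → ZMod 2) a = 0 := by
  funext i; simp [tens2]

lemma tens2_add {n m : ℕ} (d e : (Fin m → Fin n) → ZMod 2) (a : Fin n → ZMod 2) :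
    tens2 (d + e) a = tens2 d a + tens2 e a := by
  funext i; simp [tens2]; ring

lemma tens2_smul {n m : ℕ} (c : ZMod 2) (d : (Fin m → Fin n) → ZMod 2) (a : Fin n → ZMod 2) :
    tens2 (c • d) a = c • tens2 d a := by
  funext i; simp [tens2]; ring

lemma zmod2_cases (x : ZMod 2) : x = 0 ∨ x = 1 := by revert x; decide

-- full linear independence
lemma gind_full {n k : ℕ} (Csub : Submodule (ZMod 2) (Fin n → ZMod 2))
    (hsub1 : allOnes n ∉ Csub) (g : Fin k → Fin n → ZMod 2) [NeZero k]
    (hg0 : g 0 = allOnes n) (hgsub : ∀ i, i ≠ 0 → g i ∈ Csub)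
    (hgind : LinearIndependent (ZMod 2) (fun i : {i : Fin k // i ≠ 0} => g i.1)) :
    ∀ c : Fin k → ZMod 2, ∑ t, c t • g t = 0 → ∀ t, c t = 0 := by
  intro c hc
  have hsplit : c 0 • g 0 + ∑ t ∈ Finset.univ.erase 0, c t • g t = ∑ t, c t • g t :=
    Finset.add_sum_erase Finset.univ (fun t => c t • g t) (Finset.mem_univ (0 : Fin k))
  set S := ∑ t ∈ Finset.univ.erase 0, c t • g t with hS
  have hSmem : S ∈ Csub := by
    apply Submodule.sum_mem
    intro t ht
    exact Submodule.smul_mem _ _ (hgsub t (Finset.ne_of_mem_erase ht))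
  have hc0 : c 0 = 0 := by
    rcases zmod2_cases (c 0) with h | h
    · exact h
    · exfalso
      apply hsub1
      have : g 0 = -S := by
        have := hsplit.trans hc
        rw [h, one_smul] at this
        linear_combination (norm := module) this
      rw [← hg0, this]
      exact Submodule.neg_mem _ hSmem
  have hS0 : S = 0 := by
    have := hsplit.trans hc
    rwa [hc0, zero_smul, zero_add] at this
  have hsub2 : ∑ t : {i : Fin k // i ≠ 0}, c t.1 • g t.1 = S := by
    rw [hS]
    exact (Finset.sum_subtype (Finset.univ.erase 0) (fun x => by simp) (fun t => c t • g t)).symm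
  have hall : ∀ t : {i : Fin k // i ≠ 0}, c t.1 = 0 := by
    have := Fintype.linearIndependent_iff.mp hgind (fun t => c t.1) (by rw [hsub2, hS0])
    exact this
  intro t
  by_cases ht : t = 0
  · rw [ht]; exact hc0
  · exact hall ⟨t, ht⟩

def snocEquiv (n m : ℕ) : ((Fin m → Fin n) × Fin n) ≃ (Fin (m + 1) → Fin n) where
  toFun := fun pa => Fin.snoc pa.1 pa.2
  invFun := fun i => (Fin.init i, i (Fin.last m))
  left_inv := by rintro ⟨p, a⟩; simp
  right_inv := by intro i; simp

lemma hammingNorm_snoc {n m : ℕ} (c : (Fin (m + 1) → Fin n) → ZMod 2) :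
    hammingNorm c = ∑ p : Fin m → Fin n, hammingNorm (fun i => c (Fin.snoc p i)) := by
  classical
  unfold hammingNorm
  rw [Finset.card_filter]
  rw [← Equiv.sum_comp (snocEquiv n m) (fun x => if c x ≠ 0 then 1 else 0)]
  rw [Fintype.sum_prod_type]
  congr 1
  funext p
  rw [Finset.card_filter]
  rfl

lemma subprod_min (n k : ℕ) [NeZero k] (r m : ℕ) (g : Fin k → Fin n → ZMod 2) :
    subprod n k r (Fin m) g = subprod n k (min r m) (Fin m) g := by
  unfold subprod
  congr 1
  ext c
  constructor
  · rintro ⟨j, hj, rfl⟩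
    refine ⟨j, le_min hj ?_, rfl⟩
    calc (Finset.univ.filter fun ℓ => j ℓ ≠ 0).card ≤ Finset.univ.card :=
          Finset.card_filter_le _ _
      _ = m := by simp
  · rintro ⟨j, hj, rfl⟩
    exact ⟨j, le_trans hj (min_le_left _ _), rfl⟩

lemma decomp {n k : ℕ} [NeZero k] (g : Fin k → Fin n → ZMod 2) (m r : ℕ) :
    ∀ c ∈ subprod n k r (Fin (m + 1)) g,
      ∃ d : Fin k → ((Fin m → Fin n) → ZMod 2),
        d 0 ∈ subprod n k r (Fin m) g ∧
        (∀ t, t ≠ 0 → d t ∈ subprod n k (r - 1) (Fin m) g ∧ (r = 0 → d t = 0)) ∧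
        c = ∑ t, tens2 (d t) (g t) := by
  intro c hc
  induction hc using Submodule.span_induction with
  | mem x hx =>
    obtain ⟨j, hj, rfl⟩ := hx
    set t₀ := j (Fin.last m) with ht₀
    have hkey : bvec g j = tens2 (bvec g (Fin.init j)) (g t₀) := by
      funext i
      unfold bvec tens2
      rw [Fin.prod_univ_castSucc]
      rfl
    have hinit_le : (Finset.univ.filter fun ℓ : Fin m => Fin.init j ℓ ≠ 0).card ≤
        (Finset.univ.filter fun ℓ : Fin (m+1) => j ℓ ≠ 0).card := by
      apply Finset.card_le_card_of_injOn Fin.castSucc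
      · intro ℓ hℓ
        simp only [Finset.mem_coe, Finset.mem_filter, Finset.mem_univ, true_and] at hℓ ⊢
        exact hℓ
      · exact fun a _ b _ h => Fin.castSucc_injective m h
    refine ⟨fun t => if t = t₀ then bvec g (Fin.init j) else 0, ?_, ?_, ?_⟩
    · by_cases h0 : (0 : Fin k) = t₀
      · simp only [if_pos h0]
        exact Submodule.subset_span ⟨Fin.init j, le_trans hinit_le hj, rfl⟩
      · simp only [if_neg h0]; exact Submodule.zero_mem _
    · intro t ht
      by_cases htt : t = t₀
      · subst htt
        simp only [if_pos rfl]
        have hlast : Fin.last m ∈ Finset.univ.filter fun ℓ : Fin (m+1) => j ℓ ≠ 0 := by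
          simp only [Finset.mem_filter, Finset.mem_univ, true_and]
          rw [← ht₀]; exact ht
        have hplus : (Finset.univ.filter fun ℓ : Fin m => Fin.init j ℓ ≠ 0).card + 1 ≤
            (Finset.univ.filter fun ℓ : Fin (m+1) => j ℓ ≠ 0).card := by
          have hsubset : insert (Fin.last m)
              (((Finset.univ.filter fun ℓ : Fin m => Fin.init j ℓ ≠ 0)).image Fin.castSucc) ⊆
              Finset.univ.filter fun ℓ : Fin (m+1) => j ℓ ≠ 0 := by
            intro x hx
            rcases Finset.mem_insert.mp hx with h | h
            · rw [h]; exact hlast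
            · obtain ⟨ℓ, hℓ, rfl⟩ := Finset.mem_image.mp h
              simp only [Finset.mem_filter, Finset.mem_univ, true_and] at hℓ ⊢
              exact hℓ
          have hcard := Finset.card_le_card hsubset
          rw [Finset.card_insert_of_notMem, Finset.card_image_of_injective _
            (Fin.castSucc_injective m)] at hcard
          · omega
          · intro hmem
            obtain ⟨ℓ, _, hℓ⟩ := Finset.mem_image.mp hmem
            exact absurd hℓ (Fin.castSucc_lt_last ℓ).ne
        constructor
        · exact Submodule.subset_span ⟨Fin.init j, by omega, rfl⟩
        · intro hr0; omega
      · simp only [if_neg htt]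
        exact ⟨Submodule.zero_mem _, fun _ => by trivial⟩
    · have : ∀ t, tens2 (if t = t₀ then bvec g (Fin.init j) else 0) (g t) =
          if t = t₀ then tens2 (bvec g (Fin.init j)) (g t₀) else 0 := by
        intro t
        by_cases h : t = t₀
        · subst h; simp
        · rw [if_neg h, if_neg h, tens2_zero]
      rw [hkey]
      simp_rw [this]
      rw [Finset.sum_ite_eq' Finset.univ t₀ (fun _ => tens2 (bvec g (Fin.init j)) (g t₀))]
      simp
  | zero =>
    exact ⟨fun _ => 0, Submodule.zero_mem _, fun t _ => ⟨Submodule.zero_mem _, fun _ => rfl⟩,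
      by simp [tens2_zero]⟩
  | add x y hx hy ihx ihy =>
    obtain ⟨dx, hdx0, hdxt, hxe⟩ := ihx
    obtain ⟨dy, hdy0, hdyt, hye⟩ := ihy
    refine ⟨fun t => dx t + dy t, Submodule.add_mem _ hdx0 hdy0, ?_, ?_⟩
    · intro t ht
      exact ⟨Submodule.add_mem _ (hdxt t ht).1 (hdyt t ht).1,
        fun h0 => by show dx t + dy t = 0; rw [(hdxt t ht).2 h0, (hdyt t ht).2 h0, add_zero]⟩
    · rw [hxe, hye, ← Finset.sum_add_distrib]
      congr 1
      funext t
      exact (tens2_add _ _ _).symm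
  | smul a x hx ihx =>
    obtain ⟨dx, hdx0, hdxt, hxe⟩ := ihx
    refine ⟨fun t => a • dx t, Submodule.smul_mem _ _ hdx0, ?_, ?_⟩
    · intro t ht
      exact ⟨Submodule.smul_mem _ _ (hdxt t ht).1,
        fun h0 => by show a • dx t = 0; rw [(hdxt t ht).2 h0, smul_zero]⟩
    · rw [hxe, Finset.smul_sum]
      congr 1
      funext t
      exact (tens2_smul _ _ _).symm

lemma lower_bound {n k : ℕ} [NeZero k]
    (C Csub : Submodule (ZMod 2) (Fin n → ZMod 2))
    (hC1 : allOnes n ∈ C) (hsub : Csub ≤ C) (hsub1 : allOnes n ∉ Csub)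
    (g : Fin k → Fin n → ZMod 2) (hg0 : g 0 = allOnes n)
    (hgsub : ∀ i, i ≠ 0 → g i ∈ Csub)
    (hgind : LinearIndependent (ZMod 2) (fun i : {i : Fin k // i ≠ 0} => g i.1))
    (dC : ℕ) (hdle : ∀ x ∈ C, x ≠ 0 → dC ≤ hammingNorm x) (hdn : dC ≤ n) :
    ∀ m r, r ≤ m → ∀ c ∈ subprod n k r (Fin m) g, c ≠ 0 →
      dC ^ r * n ^ (m - r) ≤ hammingNorm c := by
  have hgC : ∀ t, g t ∈ C := by
    intro t
    by_cases ht : t = 0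
    · rw [ht, hg0]; exact hC1
    · exact hsub (hgsub t ht)
  have hindf := gind_full Csub hsub1 g hg0 hgsub hgind
  intro m
  induction m with
  | zero =>
    intro r hr c _ hcne
    interval_cases r
    simpa using Nat.one_le_iff_ne_zero.mpr (hammingNorm_ne_zero_iff.mpr hcne)
  | succ m ih =>
    intro r hr c hc hcne
    obtain ⟨d, hd0, hdt, hcsum⟩ := decomp g m r c hc
    set u : (Fin m → Fin n) → Fin n → ZMod 2 := fun p => ∑ t, d t p • g t with hu
    have hcu : ∀ p, (fun i => c (Fin.snoc p i)) = u p := by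
      intro p
      funext i
      rw [hcsum, hu]
      simp only [Finset.sum_apply, tens2, Pi.smul_apply, smul_eq_mul]
      congr 1
      funext t
      rw [Fin.init_snoc, Fin.snoc_last]
    have hwt : hammingNorm c = ∑ p, hammingNorm (u p) := by
      rw [hammingNorm_snoc]
      exact Finset.sum_congr rfl fun p _ => by rw [hcu p]
    have huC : ∀ p, u p ∈ C :=
      fun p => Submodule.sum_mem _ fun t _ => Submodule.smul_mem _ _ (hgC t)
    have hulin : ∀ p, u p = 0 → ∀ t, d t p = 0 := fun p h => hindf (fun t => d t p) h
    by_cases hall : ∀ t, t ≠ 0 → d t = 0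
    · -- c = d 0 ⊗ 1
      have hd0ne : d 0 ≠ 0 := by
        intro h0
        apply hcne
        rw [hcsum]
        have hz : ∀ t, d t = 0 := by
          intro t
          by_cases ht : t = 0
          · rw [ht]; exact h0
          · exact hall t ht
        apply Finset.sum_eq_zero
        intro t _
        rw [hz t, tens2_zero]
      have hup : ∀ p, u p = d 0 p • allOnes n := by
        intro p
        show ∑ t, d t p • g t = d 0 p • allOnes n
        rw [Finset.sum_eq_single 0]
        · rw [hg0]
        · intro t _ ht
          rw [hall t ht]
          simp
        · simp
      have hupwt : ∀ p, hammingNorm (u p) = if d 0 p ≠ 0 then n else 0 := by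
        intro p
        rw [hup p]
        rcases zmod2_cases (d 0 p) with h | h
        · rw [h]; simp
        · rw [h, if_pos one_ne_zero, one_smul]
          unfold hammingNorm allOnes
          simp
      have hwt2 : hammingNorm c = n * hammingNorm (d 0) := by
        rw [hwt]
        simp_rw [hupwt]
        rw [Finset.sum_ite, Finset.sum_const, Finset.sum_const]
        unfold hammingNorm
        simp [mul_comm]
      -- apply IH with min r m
      have hmem : d 0 ∈ subprod n k (min r m) (Fin m) g := by
        rw [← subprod_min]; exact hd0
      have hih := ih (min r m) (min_le_right _ _) (d 0) hmem hd0ne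
      rcases Nat.lt_or_ge r (m + 1) with hlt | hge
      · have hrm : min r m = r := min_eq_left (by omega)
        rw [hrm] at hih
        rw [hwt2]
        calc dC ^ r * n ^ (m + 1 - r) = n * (dC ^ r * n ^ (m - r)) := by
              rw [show m + 1 - r = (m - r) + 1 by omega, pow_succ]; ring
          _ ≤ n * hammingNorm (d 0) := Nat.mul_le_mul_left n hih
      · have hrm : r = m + 1 := by omega
        subst hrm
        have hmin : min (m + 1) m = m := min_eq_right (by omega)
        rw [hmin] at hih
        rw [hwt2]
        simp only [Nat.sub_self, pow_zero, mul_one] at hih ⊢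
        calc dC ^ (m + 1) = dC * dC ^ m := by rw [pow_succ]; ring
          _ ≤ n * dC ^ m := Nat.mul_le_mul_right _ hdn
          _ ≤ n * hammingNorm (d 0) := Nat.mul_le_mul_left n hih
    · push_neg at hall
      obtain ⟨t₀, ht₀ne, ht₀⟩ := hall
      have hr1 : 1 ≤ r := by
        by_contra h
        exact ht₀ ((hdt t₀ ht₀ne).2 (by omega))
      have hih := ih (r - 1) (by omega) (d t₀) ((hdt t₀ ht₀ne).1) ht₀
      have key : ∀ p, d t₀ p ≠ 0 → dC ≤ hammingNorm (u p) := by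
        intro p hp
        exact hdle (u p) (huC p) (fun h => hp (hulin p h t₀))
      calc dC ^ r * n ^ (m + 1 - r) = dC * (dC ^ (r - 1) * n ^ (m - (r - 1))) := by
            rw [show r = (r - 1) + 1 by omega]
            simp only [Nat.add_sub_cancel]
            rw [show m + 1 - (r - 1 + 1) = m - (r - 1) by omega, pow_succ]
            ring
        _ ≤ dC * hammingNorm (d t₀) := Nat.mul_le_mul_left dC hih
        _ = ∑ p ∈ Finset.univ.filter (fun p => d t₀ p ≠ 0), dC := by
            unfold hammingNorm
            rw [Finset.sum_const, smul_eq_mul, mul_comm]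
        _ ≤ ∑ p ∈ Finset.univ.filter (fun p => d t₀ p ≠ 0), hammingNorm (u p) := by
            apply Finset.sum_le_sum
            intro p hp
            exact key p (by simpa using hp)
        _ ≤ ∑ p, hammingNorm (u p) :=
            Finset.sum_le_sum_of_subset (Finset.filter_subset _ _)
        _ = hammingNorm c := hwt.symm

lemma card_lt_filter_le {m r : ℕ} : (Finset.univ.filter fun ℓ : Fin m => (ℓ : ℕ) < r).card ≤ r := by
  calc (Finset.univ.filter fun ℓ : Fin m => (ℓ : ℕ) < r).card ≤ (Finset.range r).card := by
        apply Finset.card_le_card_of_injOn (f := fun ℓ : Fin m => (ℓ : ℕ))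
        · intro ℓ hℓ
          simp only [Finset.mem_coe, Finset.mem_filter, Finset.mem_univ, true_and] at hℓ
          exact Finset.mem_range.mpr hℓ
        · exact fun a _ b _ h => Fin.val_injective h
    _ = r := Finset.card_range r

theorem stmt5 (n k : ℕ) [NeZero k] (hk : 2 ≤ k)
    (C Csub : Submodule (ZMod 2) (Fin n → ZMod 2))
    (hC1 : allOnes n ∈ C) (hCk : Module.finrank (ZMod 2) C = k)
    (hsub : Csub ≤ C) (hsubdim : Module.finrank (ZMod 2) Csub = k - 1)
    (hsub1 : allOnes n ∉ Csub)
    (g : Fin k → Fin n → ZMod 2) (hg0 : g 0 = allOnes n)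
    (hgsub : ∀ i, i ≠ 0 → g i ∈ Csub)
    (hgind : LinearIndependent (ZMod 2) (fun i : {i : Fin k // i ≠ 0} => g i.1))
    (dC : ℕ)
    (hdle : ∀ x ∈ C, x ≠ 0 → dC ≤ hammingNorm x)
    (hdex : ∃ x ∈ C, x ≠ 0 ∧ hammingNorm x = dC)
    (m r : ℕ) (hr : r ≤ m) :
    IsLeast {w : ℕ | ∃ c ∈ subprod n k r (Fin m) g, c ≠ 0 ∧ hammingNorm c = w}
      (dC ^ r * n ^ (m - r)) := by
  classical
  obtain ⟨x, hxC, hxne, hxd⟩ := hdex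
  have hd1 : 1 ≤ dC := by
    rw [← hxd]
    exact Nat.one_le_iff_ne_zero.mpr (hammingNorm_ne_zero_iff.mpr hxne)
  have hdn : dC ≤ n := by
    rw [← hxd]
    calc hammingNorm x ≤ Fintype.card (Fin n) := hammingNorm_le_card_fintype
      _ = n := Fintype.card_fin n
  have hn1 : 1 ≤ n := le_trans hd1 hdn
  have hgC : ∀ t, g t ∈ C := by
    intro t
    by_cases ht : t = 0
    · rw [ht, hg0]; exact hC1
    · exact hsub (hgsub t ht)
  have hindf := gind_full Csub hsub1 g hg0 hgsub hgind
  have hgfull : LinearIndependent (ZMod 2) g :=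
    Fintype.linearIndependent_iff.mpr (fun cc h => hindf cc h)
  have hne : Nonempty (Fin k) := ⟨⟨0, Nat.pos_of_ne_zero (NeZero.ne k)⟩⟩
  -- coefficients of x in the basis g
  have hxa : ∃ a : Fin k → ZMod 2, x = ∑ t, a t • g t := by
    set G : Fin k → C := fun t => ⟨g t, hgC t⟩ with hG
    have hGind : LinearIndependent (ZMod 2) G := by
      apply LinearIndependent.of_comp C.subtype
      exact hgfull
    let B := basisOfLinearIndependentOfCardEqFinrank hGind (by rw [Fintype.card_fin, hCk])
    have hB : ⇑B = G := coe_basisOfLinearIndependentOfCardEqFinrank _ _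
    refine ⟨fun t => B.repr ⟨x, hxC⟩ t, ?_⟩
    have h1 := B.sum_repr ⟨x, hxC⟩
    have h2 := congrArg (Subtype.val) h1
    simpa [hB, hG] using h2.symm
  obtain ⟨a, hxa⟩ := hxa
  -- construction of the minimum-weight codeword
  set h : Fin m → Fin n → ZMod 2 := fun ℓ => if (ℓ : ℕ) < r then x else allOnes n with hh
  set cw : (Fin m → Fin n) → ZMod 2 := fun i => ∏ ℓ, h ℓ (i ℓ) with hcw
  set A : Fin m → Fin k → ZMod 2 :=
    fun ℓ t => if (ℓ : ℕ) < r then a t else (if t = 0 then 1 else 0) with hA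
  have hhA : ∀ ℓ, h ℓ = ∑ t, A ℓ t • g t := by
    intro ℓ
    show (if (ℓ : ℕ) < r then x else allOnes n) =
      ∑ t, (if (ℓ : ℕ) < r then a t else (if t = 0 then 1 else 0)) • g t
    by_cases hℓ : (ℓ : ℕ) < r
    · simp only [if_pos hℓ]; exact hxa
    · simp only [if_neg hℓ]
      have hstep : ∀ t : Fin k, (if t = 0 then (1 : ZMod 2) else 0) • g t =
          if t = 0 then g t else 0 := by
        intro t; split <;> simp
      simp_rw [hstep]
      rw [Finset.sum_ite_eq' Finset.univ (0 : Fin k) g]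
      simp [hg0]
  have hcmem : cw ∈ subprod n k r (Fin m) g := by
    have hker : cw = ∑ j : Fin m → Fin k, (∏ ℓ, A ℓ (j ℓ)) • bvec g j := by
      funext i
      show (∏ ℓ, h ℓ (i ℓ)) = _
      have hstep : ∀ ℓ, h ℓ (i ℓ) = ∑ t, A ℓ t * g t (i ℓ) := by
        intro ℓ
        rw [hhA ℓ]
        simp [Finset.sum_apply]
      simp_rw [hstep]
      rw [Finset.prod_univ_sum (fun _ => Finset.univ) (fun ℓ t => A ℓ t * g t (i ℓ))]
      rw [Fintype.piFinset_univ, Finset.sum_apply]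
      apply Finset.sum_congr rfl
      intro j _
      rw [Pi.smul_apply, smul_eq_mul]
      show ∏ ℓ, A ℓ (j ℓ) * g (j ℓ) (i ℓ) = (∏ ℓ, A ℓ (j ℓ)) * ∏ ℓ, g (j ℓ) (i ℓ)
      rw [Finset.prod_mul_distrib]
    rw [hker]
    apply Submodule.sum_mem
    intro j _
    by_cases hwj : (Finset.univ.filter fun ℓ => j ℓ ≠ 0).card ≤ r
    · exact Submodule.smul_mem _ _ (Submodule.subset_span ⟨j, hwj, rfl⟩)
    · have hz : (∏ ℓ, A ℓ (j ℓ)) = 0 := by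
        by_contra hnz
        apply hwj
        have hsupp : ∀ ℓ, j ℓ ≠ 0 → (ℓ : ℕ) < r := by
          intro ℓ hjl
          by_contra hlr
          apply hnz
          apply Finset.prod_eq_zero (Finset.mem_univ ℓ)
          show (if (ℓ : ℕ) < r then a (j ℓ) else (if j ℓ = 0 then 1 else 0)) = 0
          rw [if_neg hlr, if_neg hjl]
        calc (Finset.univ.filter fun ℓ => j ℓ ≠ 0).card
            ≤ (Finset.univ.filter fun ℓ : Fin m => (ℓ : ℕ) < r).card := by
              apply Finset.card_le_card
              intro ℓ hℓ
              simp only [Finset.mem_filter, Finset.mem_univ, true_and] at hℓ ⊢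
              exact hsupp ℓ hℓ
          _ ≤ r := card_lt_filter_le
      rw [hz, zero_smul]
      exact Submodule.zero_mem _
  have hfil : ∀ ℓ : Fin m, hammingNorm (h ℓ) = if (ℓ : ℕ) < r then dC else n := by
    intro ℓ
    by_cases hℓ : (ℓ : ℕ) < r
    · have hhl : h ℓ = x := by simp only [hh, if_pos hℓ]
      rw [hhl, hxd, if_pos hℓ]
    · have hhl : h ℓ = allOnes n := by simp only [hh, if_neg hℓ]
      rw [hhl, if_neg hℓ]
      unfold hammingNorm allOnes
      simp
  have hwc : hammingNorm cw = dC ^ r * n ^ (m - r) := by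
    unfold hammingNorm
    have hset : (Finset.univ.filter fun i => cw i ≠ 0) =
        Fintype.piFinset (fun ℓ => Finset.univ.filter fun v => h ℓ v ≠ 0) := by
      ext i
      simp only [Finset.mem_filter, Finset.mem_univ, true_and, Fintype.mem_piFinset]
      rw [show cw i = ∏ ℓ, h ℓ (i ℓ) from rfl, Finset.prod_ne_zero_iff]
      simp
    rw [show (Finset.filter (fun i => cw i ≠ 0) Finset.univ) =
      (Finset.univ.filter fun i => cw i ≠ 0) from rfl, hset, Fintype.card_piFinset]
    calc ∏ ℓ : Fin m, (Finset.univ.filter fun v => h ℓ v ≠ 0).card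
        = ∏ ℓ : Fin m, (if (ℓ : ℕ) < r then dC else n) :=
          Finset.prod_congr rfl (fun ℓ _ => hfil ℓ)
      _ = ∏ i ∈ Finset.range m, (if i < r then dC else n) :=
          Fin.prod_univ_eq_prod_range (fun i => if i < r then dC else n) m
      _ = dC ^ r * n ^ (m - r) := by
          have h1 : (Finset.range m).filter (fun i => i < r) = Finset.range r := by
            ext i; simp only [Finset.mem_filter, Finset.mem_range]; omega
          have h2 : (Finset.range m).filter (fun i => ¬ i < r) = Finset.Ico r m := by
            ext i; simp only [Finset.mem_filter, Finset.mem_range, Finset.mem_Ico]; omega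
          rw [← Finset.prod_filter_mul_prod_filter_not (Finset.range m) (fun i => i < r)]
          rw [Finset.prod_congr h1 (fun i hi => if_pos (Finset.mem_range.mp hi))]
          rw [Finset.prod_congr h2 (fun i hi => if_neg (by
            simp only [Finset.mem_Ico] at hi; omega))]
          rw [Finset.prod_const, Finset.prod_const, Finset.card_range, Nat.card_Ico]
  have hcwne : cw ≠ 0 := by
    intro h0
    rw [h0, hammingNorm_zero] at hwc
    have hpos : 0 < dC ^ r * n ^ (m - r) :=
      Nat.mul_pos (Nat.pow_pos (by omega)) (Nat.pow_pos (by omega))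
    omega
  constructor
  · exact ⟨cw, hcmem, hcwne, hwc⟩
  · rintro w ⟨c, hc, hcne', rfl⟩
    exact lower_bound C Csub hC1 hsub hsub1 g hg0 hgsub hgind dC hdle hdn m r hr c hc hcne'
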